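/- Let n be a positive integer and let A_j, B_j (1 ≤ j ≤ n) be real 2×2 matrices. Then there exists a rank-one real 2×2 matrix C such that the 2×2×2 tensor (A_j; B_j + C) has rank at most 2 for every j. -/

import Mathlib

open Matrix BigOperators

/-- Cayley hyperdeterminant (up to sign) of a 2×2×2 tensor given by matrix slices A, B. -/
noncomputable def Delta {F : Type*} [Field F] (A B : Matrix (Fin 2) (Fin 2) F) : F :=
  ((A + B).det - (A - B).det) ^ 2 / 4 - 4 * A.det * B.det

/-- Rank of a 2×2×2 tensor, given as a pair of 2×2 matrix slices. -/
noncomputable def trank3 {F : Type*} [Field F] (T : Fin 2 → Matrix (Fin 2) (Fin 2) F) : ℕ :=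
  sInf {r | ∃ u v w : Fin r → Fin 2 → F, ∀ k i j, T k i j = ∑ s, u s k * v s i * w s j}

/-- Rank of a 2×2×2×2 tensor, given as a 2×2 array of 2×2 matrix slices. -/
noncomputable def trank4 {F : Type*} [Field F] (T : Fin 2 → Fin 2 → Matrix (Fin 2) (Fin 2) F) : ℕ :=
  sInf {r | ∃ u v w z : Fin r → Fin 2 → F,
    ∀ k l i j, T k l i j = ∑ s, u s k * v s l * w s i * z s j}

/-- The 2×2 matrix with columns u and v. -/
def col2 {F : Type*} [Field F] (u v : Fin 2 → F) : Matrix (Fin 2) (Fin 2) F :=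
  Matrix.of fun i j => ![u, v] j i

/-!
If `Delta X Y > 0`, the quadratic `t ↦ det (X + t • Y)` has two distinct real roots (or, when
`det Y = 0`, one root, and `Y` is singular itself), so `X` and `Y` lie in the span of two singular,
hence rank-one, matrices: the tensor `(X; Y)` has rank at most 2.

For singular `C`, `Delta A (B + s • C)` is a quadratic in `s` with leading coefficient
`polarDet A C ^ 2`, so it is positive for large `s` as soon as `polarDet A C ≠ 0`. On the moment
curve `C = (1, t) ⊗ (1, t²)`, `polarDet A C` is a cubic in `t` whose coefficients are the entries
of `A`, so a single `t` works for all nonzero `A j` simultaneously; the slices with `A j = 0` have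
rank at most 2 anyway.
-/

open Filter Polynomial

section CommRing

variable {R : Type*} [CommRing R]

def polarDet (X Y : Matrix (Fin 2) (Fin 2) R) : R :=
  X 0 0 * Y 1 1 + X 1 1 * Y 0 0 - X 0 1 * Y 1 0 - X 1 0 * Y 0 1

lemma det_add_smul_fin_two (X Y : Matrix (Fin 2) (Fin 2) R) (s : R) :
    (X + s • Y).det = X.det + s * polarDet X Y + s ^ 2 * Y.det := by
  simp only [det_fin_two, polarDet, Matrix.add_apply, Matrix.smul_apply, smul_eq_mul]
  ring

end CommRing

section Field

variable {F : Type*} [Field F]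

lemma Delta_eq_discrim [NeZero (2 : F)] (X Y : Matrix (Fin 2) (Fin 2) F) :
    Delta X Y = discrim Y.det (polarDet X Y) X.det := by
  have h4 : (4 : F) ≠ 0 := by
    simpa [show (4 : F) = 2 ^ 2 by norm_num] using (NeZero.ne (2 : F))
  simp only [Delta, discrim, det_fin_two, polarDet, Matrix.add_apply, Matrix.sub_apply]
  field_simp
  ring

lemma Delta_add_smul_of_det_eq_zero [NeZero (2 : F)] {C : Matrix (Fin 2) (Fin 2) F}
    (hC : C.det = 0) (X Y : Matrix (Fin 2) (Fin 2) F) (s : F) :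
    Delta X (Y + s • C) = polarDet X C ^ 2 * s ^ 2
      + (2 * polarDet X Y * polarDet X C - 4 * X.det * polarDet Y C) * s + Delta X Y := by
  simp only [Delta_eq_discrim, discrim, det_add_smul_fin_two, hC, polarDet, Matrix.add_apply,
    Matrix.smul_apply, smul_eq_mul]
  ring

lemma exists_eq_vecMulVec_of_det_eq_zero {M : Matrix (Fin 2) (Fin 2) F} (h : M.det = 0) :
    ∃ u v, M = vecMulVec u v := by
  rw [det_fin_two] at h
  by_cases h00 : M 0 0 = 0
  · by_cases h10 : M 1 0 = 0
    · refine ⟨![M 0 1, M 1 1], ![0, 1], ?_⟩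
      ext i j; fin_cases i <;> fin_cases j <;> simp [h00, h10]
    · have h01 : M 0 1 = 0 := by simpa [h00, h10] using h
      refine ⟨![0, M 1 0], ![1, M 1 1 / M 1 0], ?_⟩
      ext i j; fin_cases i <;> fin_cases j <;> simp [h00, h01, mul_div_cancel₀ _ h10]
  · have h11 : M 1 0 * (M 0 1 / M 0 0) = M 1 1 := by
      field_simp
      linear_combination -h
    refine ⟨![M 0 0, M 1 0], ![1, M 0 1 / M 0 0], ?_⟩
    ext i j; fin_cases i <;> fin_cases j <;> simp [mul_div_cancel₀ _ h00, h11]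

lemma trank3_le_two_of_eq_smul_add_smul {X Y P Q : Matrix (Fin 2) (Fin 2) F}
    (hP : P.det = 0) (hQ : Q.det = 0) {a b c d : F}
    (hX : X = a • P + b • Q) (hY : Y = c • P + d • Q) : trank3 ![X, Y] ≤ 2 := by
  obtain ⟨p, p', rfl⟩ := exists_eq_vecMulVec_of_det_eq_zero hP
  obtain ⟨q, q', rfl⟩ := exists_eq_vecMulVec_of_det_eq_zero hQ
  refine Nat.sInf_le ⟨![![a, c], ![b, d]], ![p, q], ![p', q'], fun k i j => ?_⟩
  fin_cases k <;>
    simp only [hX, hY, Fin.sum_univ_two, Matrix.add_apply, Matrix.smul_apply, vecMulVec_apply,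
      smul_eq_mul, cons_val_zero, cons_val_one, cons_val_fin_one, Fin.zero_eta, Fin.mk_one] <;> ring

lemma trank3_zero_left_le_two (Y : Matrix (Fin 2) (Fin 2) F) : trank3 ![0, Y] ≤ 2 := by
  refine trank3_le_two_of_eq_smul_add_smul (a := 0) (b := 0) (c := 1) (d := 1)
    (P := Y * single 0 0 1) (Q := Y * single 1 1 1) ?_ ?_ (by simp) ?_
  · simp [det_fin_two]
  · simp [det_fin_two]
  · have hsum : single 0 0 1 + single 1 1 1 = (1 : Matrix (Fin 2) (Fin 2) F) := by
      ext i j; fin_cases i <;> fin_cases j <;> simp [one_apply]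
    rw [one_smul, one_smul, ← mul_add, hsum, mul_one]

lemma trank3_le_two_of_det_add_smul_eq_zero {X Y : Matrix (Fin 2) (Fin 2) F} {t₁ t₂ : F}
    (ht : t₁ ≠ t₂) (h₁ : (X + t₁ • Y).det = 0) (h₂ : (X + t₂ • Y).det = 0) :
    trank3 ![X, Y] ≤ 2 := by
  have ht' : t₁ - t₂ ≠ 0 := sub_ne_zero.2 ht
  refine trank3_le_two_of_eq_smul_add_smul h₁ h₂ (a := -t₂ / (t₁ - t₂))
    (b := t₁ / (t₁ - t₂)) (c := 1 / (t₁ - t₂)) (d := -1 / (t₁ - t₂)) ?_ ?_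
  all_goals ext i j; simp only [Matrix.add_apply, Matrix.smul_apply, smul_eq_mul]; field_simp; ring

end Field

lemma exists_det_add_smul_eq_zero {X Y : Matrix (Fin 2) (Fin 2) ℝ} (hY : Y.det ≠ 0)
    (h : 0 < Delta X Y) :
    ∃ t₁ t₂ : ℝ, t₁ ≠ t₂ ∧ (X + t₁ • Y).det = 0 ∧ (X + t₂ • Y).det = 0 := by
  rw [Delta_eq_discrim] at h
  set s := √(discrim Y.det (polarDet X Y) X.det)
  have hs : discrim Y.det (polarDet X Y) X.det = s * s := (Real.mul_self_sqrt h.le).symm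
  have hroot := fun t => (quadratic_eq_zero_iff hY hs t).2
  have hs₀ : 0 < s := Real.sqrt_pos.2 h
  refine ⟨(-polarDet X Y + s) / (2 * Y.det), (-polarDet X Y - s) / (2 * Y.det), ?_, ?_, ?_⟩
  · intro heq
    field_simp at heq
    linarith
  · rw [det_add_smul_fin_two]; linear_combination hroot _ (Or.inl rfl)
  · rw [det_add_smul_fin_two]; linear_combination hroot _ (Or.inr rfl)

lemma trank3_le_two_of_Delta_pos {X Y : Matrix (Fin 2) (Fin 2) ℝ} (h : 0 < Delta X Y) :
    trank3 ![X, Y] ≤ 2 := by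
  by_cases hY : Y.det = 0
  · have hp : polarDet X Y ≠ 0 := by
      rintro hp; simp [Delta_eq_discrim, discrim, hp, hY] at h
    refine trank3_le_two_of_eq_smul_add_smul (P := X + (-X.det / polarDet X Y) • Y) (Q := Y)
      (a := 1) (b := X.det / polarDet X Y) (c := 0) (d := 1) ?_ hY ?_ (by simp)
    · rw [det_add_smul_fin_two, hY]; field_simp; ring
    · module
  · obtain ⟨t₁, t₂, ht, h₁, h₂⟩ := exists_det_add_smul_eq_zero hY h
    exact trank3_le_two_of_det_add_smul_eq_zero ht h₁ h₂

lemma eventually_pos_quadratic {a : ℝ} (ha : 0 < a) (b c : ℝ) :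
    ∀ᶠ x : ℝ in atTop, 0 < a * x ^ 2 + b * x + c := by
  filter_upwards [eventually_ge_atTop ((|b| + |c| + 1) / a), eventually_ge_atTop 1] with x hx hx₁
  rw [div_le_iff₀ ha] at hx
  nlinarith [neg_abs_le b, neg_abs_le c, abs_nonneg c, abs_nonneg b]

lemma eventually_Delta_add_smul_pos {X C : Matrix (Fin 2) (Fin 2) ℝ} (hC : C.det = 0)
    (hXC : polarDet X C ≠ 0) (Y : Matrix (Fin 2) (Fin 2) ℝ) :
    ∀ᶠ s : ℝ in atTop, 0 < Delta X (Y + s • C) := by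
  simp only [Delta_add_smul_of_det_eq_zero hC]
  exact eventually_pos_quadratic (by positivity) _ _

lemma rank_vecMulVec_eq_one {K : Type*} [Field K] {m n : Type*} [Fintype m] [Fintype n]
    {u : m → K} {v : n → K} (hu : u ≠ 0) (hv : v ≠ 0) : (vecMulVec u v).rank = 1 := by
  classical
  refine le_antisymm (rank_vecMulVec_le u v) (Nat.one_le_iff_ne_zero.2 fun h => ?_)
  rw [Matrix.rank, Submodule.finrank_eq_zero, LinearMap.range_eq_bot] at h
  have : vecMulVec u v = 0 := Matrix.toLin'.injective (by rw [map_zero]; exact h)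
  obtain ⟨i, hi⟩ := Function.ne_iff.1 hu
  obtain ⟨j, hj⟩ := Function.ne_iff.1 hv
  exact mul_ne_zero hi hj (congrFun₂ this i j)

lemma exists_forall_eval_ne_zero {K ι : Type*} [Field K] [Infinite K] [Fintype ι]
    (p : ι → K[X]) : ∃ t, ∀ i, p i ≠ 0 → (p i).eval t ≠ 0 := by
  classical
  set q := ∏ i ∈ Finset.univ.filter (p · ≠ 0), p i
  have hq : q ≠ 0 := Finset.prod_ne_zero_iff.2 fun i hi => (Finset.mem_filter.1 hi).2
  obtain ⟨t, ht⟩ := q.exists_eval_ne_zero_of_natDegree_lt_card hq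
    (Cardinal.natCast_lt_aleph0.trans_le (Cardinal.aleph0_le_mk K))
  refine ⟨t, fun i hi => ?_⟩
  rw [eval_prod, Finset.prod_ne_zero_iff] at ht
  exact ht i (Finset.mem_filter.2 ⟨Finset.mem_univ i, hi⟩)

lemma exists_forall_polarDet_vecMulVec_ne_zero {K ι : Type*} [Field K] [Infinite K] [Fintype ι]
    (A : ι → Matrix (Fin 2) (Fin 2) K) :
    ∃ t : K, ∀ i, A i ≠ 0 → polarDet (A i) (vecMulVec ![1, t] ![1, t ^ 2]) ≠ 0 := by
  let p (M : Matrix (Fin 2) (Fin 2) K) : K[X] :=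
    C (M 1 1) - C (M 0 1) * X - C (M 1 0) * X ^ 2 + C (M 0 0) * X ^ 3
  have hp (M : Matrix (Fin 2) (Fin 2) K) (h : p M = 0) : M = 0 := by
    have hc (k : ℕ) : (p M).coeff k = 0 := by rw [h, coeff_zero]
    have h₀ := hc 0; have h₁ := hc 1; have h₂ := hc 2; have h₃ := hc 3
    simp [p, coeff_X, coeff_C, coeff_X_pow] at h₀ h₁ h₂ h₃
    ext i j; fin_cases i <;> fin_cases j <;> simp [h₀, h₁, h₂, h₃]
  have heval (M : Matrix (Fin 2) (Fin 2) K) (t : K) :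
      (p M).eval t = polarDet M (vecMulVec ![1, t] ![1, t ^ 2]) := by
    simp only [p, polarDet, eval_add, eval_sub, eval_mul, eval_pow, eval_C, eval_X,
      vecMulVec_apply, cons_val_zero, cons_val_one, cons_val_fin_one]
    ring
  obtain ⟨t, ht⟩ := exists_forall_eval_ne_zero fun i => p (A i)
  exact ⟨t, fun i hi => heval (A i) t ▸ ht i (mt (hp _) hi)⟩

theorem stmt18_general (n : ℕ) (A B : Fin n → Matrix (Fin 2) (Fin 2) ℝ) :
    ∃ C : Matrix (Fin 2) (Fin 2) ℝ, C.rank = 1 ∧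
      ∀ j : Fin n, trank3 ![A j, B j + C] ≤ 2 := by
  obtain ⟨t, ht⟩ := exists_forall_polarDet_vecMulVec_ne_zero A
  set C := vecMulVec ![1, t] ![1, t ^ 2]
  have hC : C.det = 0 := det_vecMulVec _ _
  have hlarge :
      ∀ᶠ s : ℝ in atTop, 0 < s ∧ ∀ j, A j ≠ 0 → 0 < Delta (A j) (B j + s • C) :=
    (eventually_gt_atTop 0).and <| eventually_all.2 fun j =>
      eventually_imp_distrib_left.2 fun hA => eventually_Delta_add_smul_pos hC (ht j hA) (B j)
  obtain ⟨s, hs, hDelta⟩ := hlarge.exists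
  refine ⟨s • C, ?_, fun j => ?_⟩
  · rw [← smul_vecMulVec]
    exact rank_vecMulVec_eq_one (by simp [hs.ne']) (by simp)
  · by_cases hA : A j = 0
    · rw [hA]
      exact trank3_zero_left_le_two _
    · exact trank3_le_two_of_Delta_pos (hDelta j hA)

theorem stmt18 (n : ℕ) (hn : 0 < n) (A B : Fin n → Matrix (Fin 2) (Fin 2) ℝ) :
    ∃ C : Matrix (Fin 2) (Fin 2) ℝ, C.rank = 1 ∧
      ∀ j : Fin n, trank3 ![A j, B j + C] ≤ 2 :=
  stmt18_general n A B
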